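/- Fix m, l, g > 0 and ρ ∈ ℝ with ρ ≠ 0 and ρ ≠ m. Let Ω₁, Ω₂ : ℝ → ℝ and v, Γ : ℝ → ℝ³ solve the spherical-pendulum closed-loop system. Then the modified energy 𝓔(t) = (m l²/2)(Ω₁(t)² + Ω₂(t)²) + m (ρ/(ρ − m)) g l Γ₃(t) is constant in t. -/

import Mathlib

open Matrix

notation:74 a:74 " ×₃ " b:75 => crossProduct a b

/-- The spherical-pendulum closed-loop system: with `Ω = (Ω₁, Ω₂, 0)`,
`μ = (m l² Ω₁ − m l v₂, m l² Ω₂ + m l v₁, 0)` and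
`p = (ρ v₁ + m l Ω₂, ρ v₂ − m l Ω₁, ρ v₃)`, the first two components of
`μ' = μ × Ω + p × v − m g l (e₃ × Γ)` hold, together with `p' = p × Ω` and
`Γ' = Γ × Ω`. -/
def SphPendCL (m l g ρ : ℝ) (Ω₁ Ω₂ : ℝ → ℝ) (v Γ : ℝ → Fin 3 → ℝ) : Prop :=
  let Ω : ℝ → Fin 3 → ℝ := fun t => ![Ω₁ t, Ω₂ t, 0]
  let μ : ℝ → Fin 3 → ℝ := fun t =>
    ![m * l ^ 2 * Ω₁ t - m * l * v t 1, m * l ^ 2 * Ω₂ t + m * l * v t 0, 0]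
  let p : ℝ → Fin 3 → ℝ := fun t =>
    ![ρ * v t 0 + m * l * Ω₂ t, ρ * v t 1 - m * l * Ω₁ t, ρ * v t 2]
  Differentiable ℝ Ω₁ ∧ Differentiable ℝ Ω₂ ∧ Differentiable ℝ v ∧ Differentiable ℝ Γ ∧
  (∀ t, deriv μ t 0
      = (μ t ×₃ Ω t + p t ×₃ v t - (m * g * l) • (![(0 : ℝ), 0, 1] ×₃ Γ t)) 0) ∧
  (∀ t, deriv μ t 1
      = (μ t ×₃ Ω t + p t ×₃ v t - (m * g * l) • (![(0 : ℝ), 0, 1] ×₃ Γ t)) 1) ∧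
  (∀ t, deriv p t = p t ×₃ Ω t) ∧
  (∀ t, deriv Γ t = Γ t ×₃ Ω t)

/-! Eliminating `v'` between the first two components of the `μ`-equation and of the
`p`-equation leaves `m l² (ρ - m) Ω' = ρ m g l (Γ × e₃)`: for `ρ ≠ m` the closed loop moves as
a spherical pendulum with gravitational constant `(ρ / (ρ - m)) g`, whose energy is conserved. -/

theorem hasDerivAt_vecCons₃ {𝕜 F : Type*} [NontriviallyNormedField 𝕜] [NormedAddCommGroup F]
    [NormedSpace 𝕜 F] {f₀ f₁ f₂ : 𝕜 → F} {a₀ a₁ a₂ : F} {t : 𝕜} (h₀ : HasDerivAt f₀ a₀ t)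
    (h₁ : HasDerivAt f₁ a₁ t) (h₂ : HasDerivAt f₂ a₂ t) :
    HasDerivAt (fun s => ![f₀ s, f₁ s, f₂ s]) ![a₀, a₁, a₂] t :=
  hasDerivAt_pi.mpr fun i => by fin_cases i <;> simpa

section SphericalPendulum

variable (m l G : ℝ) (Ω₁ Ω₂ : ℝ → ℝ) (Γ : ℝ → Fin 3 → ℝ)

/-- The equations `m l² Ω' = m G l (Γ × e₃)` and `Γ₃' = (Γ × Ω)₃` of a spherical pendulum
with `Ω = (Ω₁, Ω₂, 0)`. -/
structure IsSphPendulum : Prop where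
  differentiable_Ω₁ : Differentiable ℝ Ω₁
  differentiable_Ω₂ : Differentiable ℝ Ω₂
  differentiable_Γ₃ : Differentiable ℝ fun s => Γ s 2
  deriv_Ω₁ : ∀ t, m * l ^ 2 * deriv Ω₁ t = m * G * l * Γ t 1
  deriv_Ω₂ : ∀ t, m * l ^ 2 * deriv Ω₂ t = -(m * G * l * Γ t 0)
  deriv_Γ₃ : ∀ t, deriv (fun s => Γ s 2) t = Γ t 0 * Ω₂ t - Γ t 1 * Ω₁ t

noncomputable def sphPendulumEnergy (t : ℝ) : ℝ :=
  m * l ^ 2 / 2 * (Ω₁ t ^ 2 + Ω₂ t ^ 2) + m * G * l * Γ t 2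

variable {m l G Ω₁ Ω₂ Γ}

theorem IsSphPendulum.hasDerivAt_energy (h : IsSphPendulum m l G Ω₁ Ω₂ Γ) (t : ℝ) :
    HasDerivAt (sphPendulumEnergy m l G Ω₁ Ω₂ Γ) 0 t := by
  have hd := ((((h.differentiable_Ω₁ t).hasDerivAt.pow 2).add
    ((h.differentiable_Ω₂ t).hasDerivAt.pow 2)).const_mul (m * l ^ 2 / 2)).add
    ((h.differentiable_Γ₃ t).hasDerivAt.const_mul (m * G * l))
  refine hd.congr_deriv ?_
  rw [h.deriv_Γ₃]
  push_cast
  linear_combination Ω₁ t * h.deriv_Ω₁ t + Ω₂ t * h.deriv_Ω₂ t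

theorem IsSphPendulum.energy_eq (h : IsSphPendulum m l G Ω₁ Ω₂ Γ) (t : ℝ) :
    sphPendulumEnergy m l G Ω₁ Ω₂ Γ t = sphPendulumEnergy m l G Ω₁ Ω₂ Γ 0 :=
  is_const_of_deriv_eq_zero (fun s => (h.hasDerivAt_energy s).differentiableAt)
    (fun s => (h.hasDerivAt_energy s).deriv) t 0

end SphericalPendulum

namespace SphPendCL

variable {m l g ρ : ℝ} {Ω₁ Ω₂ : ℝ → ℝ} {v Γ : ℝ → Fin 3 → ℝ}

theorem coord_eqs (h : SphPendCL m l g ρ Ω₁ Ω₂ v Γ) (t : ℝ) :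
    m * l ^ 2 * deriv Ω₁ t - m * l * deriv (fun s => v s 1) t
        = -(m * l * Ω₁ t * v t 2) + m * g * l * Γ t 1 ∧
      m * l ^ 2 * deriv Ω₂ t + m * l * deriv (fun s => v s 0) t
        = -(m * l * Ω₂ t * v t 2) - m * g * l * Γ t 0 ∧
      ρ * deriv (fun s => v s 0) t + m * l * deriv Ω₂ t = -(ρ * v t 2 * Ω₂ t) ∧
      ρ * deriv (fun s => v s 1) t - m * l * deriv Ω₁ t = ρ * v t 2 * Ω₁ t ∧
      deriv (fun s => Γ s 2) t = Γ t 0 * Ω₂ t - Γ t 1 * Ω₁ t := by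
  obtain ⟨hΩ₁, hΩ₂, hv, hΓ, hμ₀, hμ₁, hp, hΓ'⟩ := h
  have hv' (i : Fin 3) : HasDerivAt (fun s => v s i) (deriv (fun s => v s i) t) t :=
    (differentiable_pi.mp hv i t).hasDerivAt
  have hΩ₁' := (hΩ₁ t).hasDerivAt
  have hΩ₂' := (hΩ₂ t).hasDerivAt
  have hμ := hasDerivAt_vecCons₃ (f₀ := fun s => m * l ^ 2 * Ω₁ s - m * l * v s 1)
    (f₁ := fun s => m * l ^ 2 * Ω₂ s + m * l * v s 0)
    ((hΩ₁'.const_mul (m * l ^ 2)).sub ((hv' 1).const_mul (m * l)))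
    ((hΩ₂'.const_mul (m * l ^ 2)).add ((hv' 0).const_mul (m * l))) (hasDerivAt_const t 0)
  have hp' := hasDerivAt_vecCons₃ (f₀ := fun s => ρ * v s 0 + m * l * Ω₂ s)
    (f₁ := fun s => ρ * v s 1 - m * l * Ω₁ s)
    (((hv' 0).const_mul ρ).add (hΩ₂'.const_mul (m * l)))
    (((hv' 1).const_mul ρ).sub (hΩ₁'.const_mul (m * l))) ((hv' 2).const_mul ρ)
  have hΓ₂ : deriv Γ t 2 = deriv (fun s => Γ s 2) t :=
    congrFun (deriv_pi fun i => differentiable_pi.mp hΓ i t) 2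
  have e₀ := hμ₀ t
  have e₁ := hμ₁ t
  have e₂ := congrFun (hp t) 0
  have e₃ := congrFun (hp t) 1
  have e₄ := congrFun (hΓ' t) 2
  rw [hμ.deriv] at e₀ e₁
  rw [hp'.deriv] at e₂ e₃
  rw [hΓ₂] at e₄
  simp only [cross_apply, Pi.add_apply, Pi.sub_apply, Pi.smul_apply, smul_eq_mul,
    Matrix.cons_val_zero, Matrix.cons_val_one, Matrix.head_cons, Matrix.cons_val_two,
    Matrix.tail_cons] at e₀ e₁ e₂ e₃ e₄
  exact ⟨by linear_combination e₀, by linear_combination e₁, by linear_combination e₂,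
    by linear_combination e₃, e₄⟩

theorem isSphPendulum (h : SphPendCL m l g ρ Ω₁ Ω₂ v Γ) (hρm : ρ ≠ m) :
    IsSphPendulum m l (ρ / (ρ - m) * g) Ω₁ Ω₂ Γ where
  differentiable_Ω₁ := h.1
  differentiable_Ω₂ := h.2.1
  differentiable_Γ₃ := differentiable_pi.mp h.2.2.2.1 2
  deriv_Ω₁ t := by
    obtain ⟨e₀, -, -, e₃, -⟩ := h.coord_eqs t
    field_simp [sub_ne_zero.mpr hρm]
    linear_combination ρ * e₀ + m * l * e₃
  deriv_Ω₂ t := by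
    obtain ⟨-, e₁, e₂, -, -⟩ := h.coord_eqs t
    field_simp [sub_ne_zero.mpr hρm]
    linear_combination ρ * e₁ - m * l * e₂
  deriv_Γ₃ t := (h.coord_eqs t).2.2.2.2

end SphPendCL

theorem sphPend_modified_energy_constant_general (m l g ρ : ℝ) (hρm : ρ ≠ m)
    (Ω₁ Ω₂ : ℝ → ℝ) (v Γ : ℝ → Fin 3 → ℝ) (hsol : SphPendCL m l g ρ Ω₁ Ω₂ v Γ)
    (𝓔 : ℝ → ℝ)
    (h𝓔 : ∀ t, 𝓔 t = m * l ^ 2 / 2 * ((Ω₁ t) ^ 2 + (Ω₂ t) ^ 2)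
        + m * (ρ / (ρ - m)) * g * l * Γ t 2) :
    ∀ t, 𝓔 t = 𝓔 0 := by
  have h𝓔_eq : 𝓔 = sphPendulumEnergy m l (ρ / (ρ - m) * g) Ω₁ Ω₂ Γ := by
    funext t
    rw [h𝓔, sphPendulumEnergy]
    ring
  rw [h𝓔_eq]
  exact (hsol.isSphPendulum hρm).energy_eq

/-- Along solutions of the spherical-pendulum closed-loop system, the modified energy
`𝓔 = (m l²/2)(Ω₁² + Ω₂²) + m (ρ/(ρ − m)) g l Γ₃` (the energy of a spherical pendulum
with modified gravitational constant `(ρ/(ρ − m)) g`) is constant in time. -/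
theorem sphPend_modified_energy_constant (m l g ρ : ℝ) (hm : 0 < m) (hl : 0 < l)
    (hg : 0 < g) (hρ : ρ ≠ 0) (hρm : ρ ≠ m)
    (Ω₁ Ω₂ : ℝ → ℝ) (v Γ : ℝ → Fin 3 → ℝ) (hsol : SphPendCL m l g ρ Ω₁ Ω₂ v Γ)
    (𝓔 : ℝ → ℝ)
    (h𝓔 : ∀ t, 𝓔 t = m * l ^ 2 / 2 * ((Ω₁ t) ^ 2 + (Ω₂ t) ^ 2)
        + m * (ρ / (ρ - m)) * g * l * Γ t 2) :
    ∀ t, 𝓔 t = 𝓔 0 :=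
  sphPend_modified_energy_constant_general m l g ρ hρm Ω₁ Ω₂ v Γ hsol 𝓔 h𝓔
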